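/- In the λα typing system, every derivable judgement has a unique derivation, and derivability of judgements is decidable. -/
import Mathlib


abbrev Var := ℕ
abbrev Ctx := Finset Var × List Var

/-- `Γ,x` : extend the local part with `x` as innermost (rightmost) variable.
Lists represent local contexts with head = outermost (leftmost). -/
def Ctx.snoc (Γ : Ctx) (x : Var) : Ctx := (Γ.1, Γ.2 ++ [x])

/-- The least partial order on contexts generated by
`(G,L) < (G ∪ {x}, L)` for `x ∉ G` and `(G,L) < (G \ {x}, x::L)`. -/
inductive CtxLe : Ctx → Ctx → Prop
  | refl (Γ : Ctx) : CtxLe Γ Γ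
  | trans {Γ Δ Θ : Ctx} : CtxLe Γ Δ → CtxLe Δ Θ → CtxLe Γ Θ
  | glob (G : Finset Var) (L : List Var) (x : Var) (h : x ∉ G) :
      CtxLe (G, L) (insert x G, L)
  | loc (G : Finset Var) (L : List Var) (x : Var) :
      CtxLe (G, L) (G.erase x, x :: L)

def Compatible (Γ Δ : Ctx) : Prop := ∃ Θ, CtxLe Γ Θ ∧ CtxLe Δ Θ

mutual
/-- Terms of the calculus λα. -/
inductive Tm : Type
  | var : Var → Tm
  | app : Tm → Tm → Tm
  | lam : Var → Tm → Tm
  | sub : Sb → Tm → Tm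
/-- Substitutions of the calculus λα: `[B/x]`, `Wx`, `{yx}`, `Sₓ`. -/
inductive Sb : Type
  | push : Tm → Var → Sb
  | weak : Var → Sb
  | ren : Var → Var → Sb
  | lift : Sb → Var → Sb
end

mutual
/-- The typing judgement `Γ ⊢ A` of λα (rules R1–R6). -/
inductive Judg : Ctx → Tm → Prop
  | r1 {G : Finset Var} {x : Var} (h : x ∈ G) : Judg (G, []) (.var x)
  | r2 (Γ : Ctx) (x : Var) : Judg (Γ.snoc x) (.var x)
  | r3 {Γ : Ctx} {x y : Var} (h : x ≠ y) : Judg Γ (.var x) → Judg (Γ.snoc y) (.var x)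
  | r4 {Γ A B} : Judg Γ A → Judg Γ B → Judg Γ (.app A B)
  | r5 {Γ x A} : Judg (Ctx.snoc Γ x) A → Judg Γ (.lam x A)
  | r6 {Γ Δ S A} : SJudg Γ S Δ → Judg Δ A → Judg Γ (.sub S A)
/-- The judgement `Γ ⊢ S ▷ Δ` of λα (rules R7–R10). -/
inductive SJudg : Ctx → Sb → Ctx → Prop
  | r7 {Γ B x} : Judg Γ B → SJudg Γ (.push B x) (Γ.snoc x)
  | r8 (Γ x) : SJudg (Ctx.snoc Γ x) (.weak x) Γ
  | r9 (Γ y x) : SJudg (Ctx.snoc Γ y) (.ren y x) (Ctx.snoc Γ x)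
  | r10 {Γ Δ S} (x) : SJudg Γ S Δ → SJudg (Ctx.snoc Γ x) (.lift S x) (Ctx.snoc Δ x)
end

mutual
/-- Derivations (proof trees) of judgements `Γ ⊢ A`, as data. -/
inductive Deriv : Ctx → Tm → Type
  | r1 {G : Finset Var} {x : Var} (h : x ∈ G) : Deriv (G, []) (.var x)
  | r2 (Γ : Ctx) (x : Var) : Deriv (Γ.snoc x) (.var x)
  | r3 {Γ : Ctx} {x y : Var} (h : x ≠ y) : Deriv Γ (.var x) → Deriv (Γ.snoc y) (.var x)
  | r4 {Γ A B} : Deriv Γ A → Deriv Γ B → Deriv Γ (.app A B)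
  | r5 {Γ x A} : Deriv (Ctx.snoc Γ x) A → Deriv Γ (.lam x A)
  | r6 {Γ Δ S A} : SDeriv Γ S Δ → Deriv Δ A → Deriv Γ (.sub S A)
/-- Derivations (proof trees) of judgements `Γ ⊢ S ▷ Δ`, as data. -/
inductive SDeriv : Ctx → Sb → Ctx → Type
  | r7 {Γ B x} : Deriv Γ B → SDeriv Γ (.push B x) (Γ.snoc x)
  | r8 (Γ x) : SDeriv (Ctx.snoc Γ x) (.weak x) Γ
  | r9 (Γ y x) : SDeriv (Ctx.snoc Γ y) (.ren y x) (Ctx.snoc Γ x)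
  | r10 {Γ Δ S} (x) : SDeriv Γ S Δ → SDeriv (Ctx.snoc Γ x) (.lift S x) (Ctx.snoc Δ x)
end


-- ===== auxiliary development =====

theorem snoc_eq {G : Finset Var} {L : List Var} {y : Var}
    (hL : L.getLast? = some y) : Ctx.snoc (G, L.dropLast) y = (G, L) :=
  congrArg (Prod.mk G) (List.dropLast_append_getLast? y hL)

mutual
def derive : (Γ : Ctx) → (A : Tm) → Option (Deriv Γ A)
  | (G, L), .var x =>
    match hL : L.getLast? with
    | none =>
      if hx : x ∈ G then
        some (by
          have h : L = [] := List.getLast?_eq_none_iff.mp hL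
          subst h; exact .r1 hx)
      else none
    | some y =>
      cast (congrArg (fun Γ => Option (Deriv Γ (Tm.var x))) (snoc_eq hL))
        (if hxy : x = y then
          some (by subst hxy; exact Deriv.r2 (G, L.dropLast) x)
        else
          (derive (G, L.dropLast) (.var x)).map (Deriv.r3 hxy))
  | Γ, .app A B => do
      let d ← derive Γ A
      let e ← derive Γ B
      return .r4 d e
  | Γ, .lam x A => (derive (Ctx.snoc Γ x) A).map .r5
  | Γ, .sub S A => do
      let p ← sderive Γ S
      let d ← derive p.1 A
      return .r6 p.2 d
  termination_by Γ A => (sizeOf A, Γ.2.length)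
  decreasing_by
    all_goals simp_wf
    all_goals first
      | exact Prod.Lex.left _ _ (by omega)
      | exact Prod.Lex.right _ (by
          have hne : L ≠ [] := by rintro rfl; simp at hL
          have := List.length_pos_iff.mpr hne; omega)

def sderive : (Γ : Ctx) → (S : Sb) → Option ((Δ : Ctx) × SDeriv Γ S Δ)
  | Γ, .push B x => (derive Γ B).map fun d => ⟨Γ.snoc x, .r7 d⟩
  | (G, L), .weak x =>
    match hL : L.getLast? with
    | none => none
    | some y =>
      if hxy : y = x then
        cast (congrArg (fun Γ => Option ((Δ : Ctx) × SDeriv Γ (Sb.weak x) Δ))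
            (snoc_eq (hxy ▸ hL)))
          (some ⟨(G, L.dropLast), .r8 (G, L.dropLast) x⟩)
      else none
  | (G, L), .ren y x =>
    match hL : L.getLast? with
    | none => none
    | some z =>
      if hzy : z = y then
        cast (congrArg (fun Γ => Option ((Δ : Ctx) × SDeriv Γ (Sb.ren y x) Δ))
            (snoc_eq (hzy ▸ hL)))
          (some ⟨Ctx.snoc (G, L.dropLast) x, .r9 (G, L.dropLast) y x⟩)
      else none
  | (G, L), .lift S x =>
    match hL : L.getLast? with
    | none => none
    | some y =>
      if hxy : y = x then
        cast (congrArg (fun Γ => Option ((Δ : Ctx) × SDeriv Γ (Sb.lift S x) Δ))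
            (snoc_eq (hxy ▸ hL)))
          ((sderive (G, L.dropLast) S).map fun p => ⟨Ctx.snoc p.1 x, .r10 x p.2⟩)
      else none
  termination_by Γ S => (sizeOf S, Γ.2.length)
  decreasing_by
    all_goals simp_wf
    all_goals first
      | exact Prod.Lex.left _ _ (by omega)
      | exact Prod.Lex.right _ (by
          have hne : L ≠ [] := by rintro rfl; simp at hL
          have := List.length_pos_iff.mpr hne; omega)
end


mutual
theorem Deriv.toJudg : ∀ {Γ A}, Deriv Γ A → Judg Γ A
  | _, _, .r1 h => .r1 h
  | _, _, .r2 Γ x => .r2 Γ x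
  | _, _, .r3 h d => .r3 h d.toJudg
  | _, _, .r4 d e => .r4 d.toJudg e.toJudg
  | _, _, .r5 d => .r5 d.toJudg
  | _, _, .r6 s d => .r6 s.toJudg d.toJudg
theorem SDeriv.toJudg : ∀ {Γ S Δ}, SDeriv Γ S Δ → SJudg Γ S Δ
  | _, _, _, .r7 d => .r7 d.toJudg
  | _, _, _, .r8 Γ x => .r8 Γ x
  | _, _, _, .r9 Γ y x => .r9 Γ y x
  | _, _, _, .r10 x s => .r10 x s.toJudg
end

theorem heq_dcast {Γ Γ' : Ctx} {A} (h : Γ = Γ') (d : Deriv Γ A) : HEq (h ▸ d) d := by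
  subst h; rfl

theorem heq_scast {Γ Γ' : Ctx} {S} (h : Γ = Γ') (p : (Δ : Ctx) × SDeriv Γ S Δ) :
    HEq (h ▸ p) p := by subst h; rfl

mutual
theorem derive_complete : ∀ {Γ A} (d : Deriv Γ A), derive Γ A = some d
  | _, _, .r1 h => by
      simp [derive, h]
  | _, _, .r2 Γ x => by
      rw [derive]
      split
      · next hL => simp [Ctx.snoc] at hL
      · next y hL =>
          obtain rfl : x = y := by simpa [Ctx.snoc] using hL
          refine eq_of_heq ((cast_heq _ _).trans ?_)
          rw [dif_pos rfl, show ((Γ.snoc x).2.dropLast) = Γ.2 from by simp [Ctx.snoc]]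
          exact HEq.rfl
  | _, _, @Deriv.r3 Γ x y h d => by
      have ih := derive_complete d
      rw [derive]
      split
      · next hL => simp [Ctx.snoc] at hL
      · next z hL =>
          obtain rfl : y = z := by simpa [Ctx.snoc] using hL
          refine eq_of_heq ((cast_heq _ _).trans ?_)
          rw [dif_neg h,
            show ((Γ.snoc y).2.dropLast) = Γ.2 from by simp [Ctx.snoc],
            show (((Γ.snoc y).1, Γ.2) : Ctx) = Γ from rfl, ih]
          exact HEq.rfl
  | _, _, .r4 d e => by
      have ihd := derive_complete d
      have ihe := derive_complete e
      rw [derive, ihd, ihe]; rfl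
  | _, _, .r5 d => by
      have ih := derive_complete d
      rw [derive, ih]; rfl
  | _, _, .r6 s d => by
      have ihs := sderive_complete s
      have ihd := derive_complete d
      rw [derive, ihs]
      show (derive _ _).bind _ = _
      rw [ihd]; rfl

theorem sderive_complete : ∀ {Γ S Δ} (d : SDeriv Γ S Δ), sderive Γ S = some ⟨Δ, d⟩
  | _, _, _, .r7 d => by
      have ih := derive_complete d
      rw [sderive, ih]; rfl
  | _, _, _, .r8 Γ x => by
      rw [sderive]
      split
      · next hL => simp [Ctx.snoc] at hL
      · next y hL =>
          obtain rfl : x = y := by simpa [Ctx.snoc] using hL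
          rw [dif_pos rfl]
          refine eq_of_heq ((cast_heq _ _).trans ?_)
          rw [show ((Γ.snoc x).2.dropLast) = Γ.2 from by simp [Ctx.snoc]]
          exact HEq.rfl
  | _, _, _, .r9 Γ y x => by
      rw [sderive]
      split
      · next hL => simp [Ctx.snoc] at hL
      · next z hL =>
          obtain rfl : y = z := by simpa [Ctx.snoc] using hL
          rw [dif_pos rfl]
          refine eq_of_heq ((cast_heq _ _).trans ?_)
          rw [show ((Γ.snoc y).2.dropLast) = Γ.2 from by simp [Ctx.snoc]]
          exact HEq.rfl
  | _, _, _, @SDeriv.r10 Γ Δ S x s => by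
      have ih := sderive_complete s
      rw [sderive]
      split
      · next hL => simp [Ctx.snoc] at hL
      · next y hL =>
          obtain rfl : x = y := by simpa [Ctx.snoc] using hL
          rw [dif_pos rfl]
          refine eq_of_heq ((cast_heq _ _).trans ?_)
          rw [show ((Γ.snoc x).2.dropLast) = Γ.2 from by simp [Ctx.snoc],
            show (((Γ.snoc x).1, Γ.2) : Ctx) = Γ from rfl, ih]
          exact HEq.rfl
end


theorem judg_nonempty : ∀ {Γ A}, Judg Γ A → Nonempty (Deriv Γ A) := by
  refine @Judg.rec (fun Γ A _ => Nonempty (Deriv Γ A))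
    (fun Γ S Δ _ => Nonempty (SDeriv Γ S Δ)) ?_ ?_ ?_ ?_ ?_ ?_ ?_ ?_ ?_ ?_
  · exact fun h => ⟨.r1 h⟩
  · exact fun Γ x => ⟨.r2 Γ x⟩
  · exact fun h _ ih => ih.map (.r3 h)
  · exact fun _ _ ⟨d⟩ ⟨e⟩ => ⟨.r4 d e⟩
  · exact fun _ ih => ih.map .r5
  · exact fun _ _ ⟨s⟩ ⟨d⟩ => ⟨.r6 s d⟩
  · exact fun _ ih => ih.map .r7
  · exact fun Γ x => ⟨.r8 Γ x⟩
  · exact fun Γ y x => ⟨.r9 Γ y x⟩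
  · exact fun x _ ih => ih.map (.r10 x)

theorem sjudg_nonempty : ∀ {Γ S Δ}, SJudg Γ S Δ → Nonempty (SDeriv Γ S Δ) := by
  refine @SJudg.rec (fun Γ A _ => Nonempty (Deriv Γ A))
    (fun Γ S Δ _ => Nonempty (SDeriv Γ S Δ)) ?_ ?_ ?_ ?_ ?_ ?_ ?_ ?_ ?_ ?_
  · exact fun h => ⟨.r1 h⟩
  · exact fun Γ x => ⟨.r2 Γ x⟩
  · exact fun h _ ih => ih.map (.r3 h)
  · exact fun _ _ ⟨d⟩ ⟨e⟩ => ⟨.r4 d e⟩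
  · exact fun _ ih => ih.map .r5
  · exact fun _ _ ⟨s⟩ ⟨d⟩ => ⟨.r6 s d⟩
  · exact fun _ ih => ih.map .r7
  · exact fun Γ x => ⟨.r8 Γ x⟩
  · exact fun Γ y x => ⟨.r9 Γ y x⟩
  · exact fun x _ ih => ih.map (.r10 x)

/-- Every derivable judgement has a unique derivation, and derivability of
judgements is decidable. -/
theorem unique_derivation_and_decidable :
    (∀ (Γ : Ctx) (A : Tm), Judg Γ A ↔ Nonempty (Deriv Γ A)) ∧
    (∀ (Γ : Ctx) (S : Sb) (Δ : Ctx), SJudg Γ S Δ ↔ Nonempty (SDeriv Γ S Δ)) ∧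
    (∀ (Γ : Ctx) (A : Tm), Subsingleton (Deriv Γ A)) ∧
    (∀ (Γ : Ctx) (S : Sb) (Δ : Ctx), Subsingleton (SDeriv Γ S Δ)) ∧
    Nonempty (∀ (Γ : Ctx) (A : Tm), Decidable (Judg Γ A)) ∧
    Nonempty (∀ (Γ : Ctx) (S : Sb) (Δ : Ctx), Decidable (SJudg Γ S Δ)) := by
  refine ⟨fun Γ A => ⟨judg_nonempty, fun ⟨d⟩ => d.toJudg⟩,
    fun Γ S Δ => ⟨sjudg_nonempty, fun ⟨d⟩ => d.toJudg⟩,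
    fun Γ A => ⟨fun d e => ?_⟩, fun Γ S Δ => ⟨fun d e => ?_⟩, ⟨fun Γ A => ?_⟩, ⟨fun Γ S Δ => ?_⟩⟩
  · have hd := derive_complete d
    rw [derive_complete e] at hd
    exact (Option.some.inj hd).symm
  · have hd := sderive_complete d
    rw [sderive_complete e] at hd
    exact (by simpa using hd : e = d).symm
  · cases hd : derive Γ A with
    | some d => exact .isTrue d.toJudg
    | none =>
      refine .isFalse fun h => ?_
      obtain ⟨d⟩ := judg_nonempty h
      rw [derive_complete d] at hd
      cases hd
  · cases hd : sderive Γ S with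
    | some p =>
      by_cases hΔ : p.1 = Δ
      · exact .isTrue (hΔ ▸ p.2.toJudg)
      · refine .isFalse fun h => ?_
        obtain ⟨d⟩ := sjudg_nonempty h
        rw [sderive_complete d] at hd
        cases hd
        exact hΔ rfl
    | none =>
      refine .isFalse fun h => ?_
      obtain ⟨d⟩ := sjudg_nonempty h
      rw [sderive_complete d] at hd
      cases hd
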